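/- arXiv:2301.13483 — 5 statements merged into one kernel-verified Lean document; each statement's English description precedes it below -/
import Mathlib

section
/- The coupling bilinear form b(μ,u) = Σ_{i=1,2} ⟨μ_i, u_i|_γ − u_γ⟩_γ satisfies the inf-sup condition: for every λ ∈ Λ, sup over v ∈ V of b(λ,v)/‖v‖_V ≥ (1/2)‖λ‖_Λ. -/
/- STATEMENT 3: The inf-sup condition for b(μ,v) = Σᵢ ⟨μᵢ, vᵢ|_γ − v_γ⟩_γ with constant 1/2:
sup over v = (v₁,v₂,v_γ) ∈ V of b(λ,v)/‖v‖_V ≥ (1/2)‖λ‖_Λ.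
Here `Vi` models H¹_{0,Γ_D^i}(Ω_i), `S` the trace space H^{1/2}_{00}(γ),
`Ti` the trace maps, `J : Vg →ₗ S` the embedding of V^γ = H¹₀(γ) into the trace space,
`Wi ⊆ Vi` the subspaces H^1_{0,∂Ω_i∖γ}(Ω_i), and `Ni = ‖λᵢ‖_{−1/2,γ}` is characterized
as the supremum over Wi of λᵢ(Tᵢ v)/‖v‖ (expressed by hNile and hNisup).
‖λ‖_Λ = √(N₁²+N₂²), ‖v‖_V = √(‖v₁‖²+‖v₂‖²+‖v_γ‖²); the sup statement is expressed
in ε-form: for every ε > 0 there is v with ‖v‖_V ≤ 1 and b(λ,v) ≥ (1/2)‖λ‖_Λ − ε. -/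
theorem stmt_3 {V1 V2 Vg S : Type*}
    [NormedAddCommGroup V1] [NormedSpace ℝ V1]
    [NormedAddCommGroup V2] [NormedSpace ℝ V2]
    [NormedAddCommGroup Vg] [NormedSpace ℝ Vg]
    [AddCommGroup S] [Module ℝ S]
    (T1 : V1 →ₗ[ℝ] S) (T2 : V2 →ₗ[ℝ] S) (J : Vg →ₗ[ℝ] S)
    (W1 : Submodule ℝ V1) (W2 : Submodule ℝ V2)
    (lam1 lam2 : S →ₗ[ℝ] ℝ) (N1 N2 : ℝ) (hN1 : 0 ≤ N1) (hN2 : 0 ≤ N2)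
    (hN1le : ∀ v ∈ W1, lam1 (T1 v) ≤ N1 * ‖v‖)
    (hN1sup : ∀ ε > 0, ∃ v ∈ W1, ‖v‖ ≤ 1 ∧ N1 - ε ≤ lam1 (T1 v))
    (hN2le : ∀ v ∈ W2, lam2 (T2 v) ≤ N2 * ‖v‖)
    (hN2sup : ∀ ε > 0, ∃ v ∈ W2, ‖v‖ ≤ 1 ∧ N2 - ε ≤ lam2 (T2 v)) :
    ∀ ε > 0, ∃ (v1 : V1) (v2 : V2) (vg : Vg),
      Real.sqrt (‖v1‖ ^ 2 + ‖v2‖ ^ 2 + ‖vg‖ ^ 2) ≤ 1 ∧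
      (1 / 2) * Real.sqrt (N1 ^ 2 + N2 ^ 2) - ε ≤
        lam1 (T1 v1 - J vg) + lam2 (T2 v2 - J vg) := by
  intro ε hε
  have hδ : (0:ℝ) < ε / 2 := by linarith
  obtain ⟨u1, hu1W, hu1n, hu1l⟩ := hN1sup (ε / 2) hδ
  obtain ⟨u2, hu2W, hu2n, hu2l⟩ := hN2sup (ε / 2) hδ
  have hs2 : (0:ℝ) < Real.sqrt 2 := by positivity
  set c : ℝ := (Real.sqrt 2)⁻¹ with hc
  have hc0 : 0 < c := by positivity
  refine ⟨c • u1, c • u2, 0, ?_, ?_⟩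
  · have h1 : ‖c • u1‖ ^ 2 ≤ c ^ 2 := by
      rw [norm_smul]
      have : ‖u1‖ ≤ 1 := hu1n
      have hcn : ‖c‖ = c := abs_of_pos hc0
      rw [hcn]
      have h1sq : ‖u1‖ ^ 2 ≤ 1 := by nlinarith [norm_nonneg u1]
      nlinarith [sq_nonneg c, h1sq]
    have h2 : ‖c • u2‖ ^ 2 ≤ c ^ 2 := by
      rw [norm_smul]
      have hcn : ‖c‖ = c := abs_of_pos hc0
      rw [hcn]
      have h2sq : ‖u2‖ ^ 2 ≤ 1 := by nlinarith [norm_nonneg u2]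
      nlinarith [sq_nonneg c, h2sq]
    have hcsq : c ^ 2 = 1 / 2 := by
      rw [hc, inv_pow, Real.sq_sqrt (by norm_num : (0:ℝ) ≤ 2)]
      norm_num
    have : ‖c • u1‖ ^ 2 + ‖c • u2‖ ^ 2 + ‖(0:Vg)‖ ^ 2 ≤ 1 := by
      simp only [norm_zero]
      nlinarith
    calc Real.sqrt (‖c • u1‖ ^ 2 + ‖c • u2‖ ^ 2 + ‖(0:Vg)‖ ^ 2)
        ≤ Real.sqrt 1 := Real.sqrt_le_sqrt this
      _ = 1 := Real.sqrt_one
  · have hJ : J (0:Vg) = 0 := map_zero J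
    simp only [hJ, sub_zero, map_smul, smul_eq_mul]
    have hhalf : Real.sqrt (N1 ^ 2 + N2 ^ 2) ≤ N1 + N2 := by
      have : Real.sqrt (N1 ^ 2 + N2 ^ 2) ≤ Real.sqrt ((N1 + N2) ^ 2) := by
        apply Real.sqrt_le_sqrt; nlinarith
      rwa [Real.sqrt_sq (by linarith)] at this
    have hle1 : c * (N1 - ε / 2) ≤ c * lam1 (T1 u1) :=
      mul_le_mul_of_nonneg_left hu1l hc0.le
    have hle2 : c * (N2 - ε / 2) ≤ c * lam2 (T2 u2) :=
      mul_le_mul_of_nonneg_left hu2l hc0.le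
    have hsle : Real.sqrt 2 ≤ 2 := by
      nlinarith [Real.sq_sqrt (show (0:ℝ) ≤ 2 by norm_num), Real.sqrt_nonneg 2]
    have hchalf : 1 / 2 ≤ c := by
      have := inv_anti₀ hs2 hsle
      rw [hc]; linarith
    have hc1 : c ≤ 1 := by
      rw [hc, inv_le_one_iff₀]
      right
      nlinarith [Real.sq_sqrt (by norm_num : (0:ℝ) ≤ 2)]
    have hsq0 : 0 ≤ Real.sqrt (N1 ^ 2 + N2 ^ 2) := Real.sqrt_nonneg _
    nlinarith [mul_le_mul_of_nonneg_left hhalf hc0.le]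
end

section
/- For each w_h in the trace space W_h^i of continuous piecewise-linear finite elements on γ (vanishing at endpoints), there exists λ_h in the modified multiplier space Λ_h^i (piecewise linear, constant on the two extreme intervals) with ∫_γ λ_h w_h ≥ ‖w_h‖²_{L²(γ)} and ‖λ_h‖_{L²(γ)} ≤ C‖w_h‖_{L²(γ)}, with C independent of the mesh size. Consequently sup over λ_h ∈ Λ_h^i of (∫_γ λ_h w_h)/‖λ_h‖_{L²(γ)} ≥ (1/C)‖w_h‖_{L²(γ)}. -/
open MeasureTheory

lemma ii_of_eqOn' {f g : ℝ → ℝ} {a b : ℝ} (hab : a ≤ b) (hg : Continuous g)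
    (h : Set.EqOn g f (Set.Icc a b)) : IntervalIntegrable f volume a b := by
  have h1 : IntegrableOn f (Set.Icc a b) :=
    (hg.integrableOn_Icc).congr_fun h measurableSet_Icc
  exact MeasureTheory.IntegrableOn.intervalIntegrable (by rwa [Set.uIcc_of_le hab])

lemma int_poly' (p q r a b : ℝ) :
    ∫ t in a..b, (p * t ^ 2 + q * t + r) =
      p * (b^3 - a^3)/3 + q * (b^2 - a^2)/2 + r * (b - a) := by
  have i2 : IntervalIntegrable (fun t : ℝ => p * t ^ 2) volume a b :=
    (by fun_prop : Continuous fun t : ℝ => p * t ^ 2).intervalIntegrable a b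
  have i1 : IntervalIntegrable (fun t : ℝ => q * t) volume a b :=
    (by fun_prop : Continuous fun t : ℝ => q * t).intervalIntegrable a b
  have i0 : IntervalIntegrable (fun _ : ℝ => r) volume a b :=
    intervalIntegrable_const
  rw [intervalIntegral.integral_add (i2.add i1) i0, intervalIntegral.integral_add i2 i1,
    intervalIntegral.integral_const_mul, intervalIntegral.integral_const_mul,
    integral_pow, integral_id, intervalIntegral.integral_const]
  push_cast
  ring_nf

lemma int_eq_poly' {f : ℝ → ℝ} {a b : ℝ} (hab : a ≤ b) (p q r : ℝ)
    (h : ∀ t ∈ Set.Icc a b, f t = p * t ^ 2 + q * t + r) :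
    ∫ t in a..b, f t = p * (b^3 - a^3)/3 + q * (b^2 - a^2)/2 + r * (b - a) := by
  rw [← int_poly' p q r a b]
  apply intervalIntegral.integral_congr
  rw [Set.uIcc_of_le hab]
  exact h



/- STATEMENT 6: On γ = (0,L) with mesh 0 = x₀ < x₁ < … < x_n = L, for each w_h in the
trace space W_h (continuous piecewise-linear, vanishing at the endpoints) there exists
λ_h in the modified multiplier space Λ_h (constant on the two extreme intervals, affine
elsewhere) with ∫_γ λ_h w_h ≥ ‖w_h‖²_{L²} and ‖λ_h‖_{L²} ≤ C‖w_h‖_{L²}, C independent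
of the mesh; consequently ∫_γ λ_h w_h ≥ (1/C)‖λ_h‖_{L²}‖w_h‖_{L²}, which witnesses
sup_{λ_h∈Λ_h} (∫_γ λ_h w_h)/‖λ_h‖ ≥ (1/C)‖w_h‖. -/
set_option maxHeartbeats 1000000 in
theorem stmt_6 :
    ∃ C : ℝ, 0 < C ∧
      ∀ L : ℝ, 0 < L → ∀ n : ℕ, 2 ≤ n → ∀ x : ℕ → ℝ,
        x 0 = 0 → x n = L → (∀ k < n, x k < x (k + 1)) →
        ∀ w : ℝ → ℝ,
          (∀ k < n, ∃ a b : ℝ, ∀ t ∈ Set.Icc (x k) (x (k + 1)), w t = a * t + b) →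
          w 0 = 0 → w L = 0 →
          ∃ lam : ℝ → ℝ,
            ((∀ t ∈ Set.Icc (x 0) (x 1), lam t = lam (x 1)) ∧
             (∀ t ∈ Set.Icc (x (n - 1)) (x n), lam t = lam (x (n - 1))) ∧
             (∀ k, 1 ≤ k → k ≤ n - 2 →
               ∃ a b : ℝ, ∀ t ∈ Set.Icc (x k) (x (k + 1)), lam t = a * t + b)) ∧
            (∫ t in (0 : ℝ)..L, (w t) ^ 2) ≤ (∫ t in (0 : ℝ)..L, lam t * w t) ∧
            (∫ t in (0 : ℝ)..L, (lam t) ^ 2) ≤ C ^ 2 * (∫ t in (0 : ℝ)..L, (w t) ^ 2) ∧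
            (1 / C) * Real.sqrt (∫ t in (0 : ℝ)..L, (lam t) ^ 2)
                * Real.sqrt (∫ t in (0 : ℝ)..L, (w t) ^ 2)
              ≤ ∫ t in (0 : ℝ)..L, lam t * w t := by
  refine ⟨Real.sqrt 3, Real.sqrt_pos.2 (by norm_num), ?_⟩
  intro L hL n hn x hx0 hxn hx w hpw hw0 hwL
  -- monotonicity
  have key : ∀ j, j ≤ n → ∀ i, i ≤ j → x i ≤ x j := by
    intro j hj
    induction j with
    | zero => intro i hi; interval_cases i; exact le_refl _
    | succ m ih =>
      intro i hi
      rcases Nat.lt_or_ge i (m+1) with h | h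
      · exact (ih (by omega) i (by omega)).trans (hx m (by omega)).le
      · have : i = m + 1 := by omega
        simp [this]
  have h01 : (0:ℝ) < x 1 := by rw [← hx0]; exact hx 0 (by omega)
  have h1m : x 1 ≤ x (n-1) := key (n-1) (by omega) 1 (by omega)
  have hn1 : n - 1 + 1 = n := by omega
  have hmL : x (n-1) < L := by
    have := hx (n-1) (by omega); rwa [hn1, hxn] at this
  set m := x (n-1) with hm
  -- affine data on extreme intervals
  obtain ⟨a, b, hw1⟩ := hpw 0 (by omega)
  rw [hx0] at hw1
  have hb : b = 0 := by
    have := hw1 0 ⟨le_refl _, h01.le⟩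
    simpa [hw0] using this.symm
  subst hb
  obtain ⟨c, d, hw3⟩ := hpw (n-1) (by omega)
  rw [hn1, hxn] at hw3
  have hd : d = -(c * L) := by
    have h := hw3 L ⟨hmL.le, le_refl _⟩
    rw [hwL] at h
    linarith
  subst hd
  -- key values of w at nodes
  have wx1 : w (x 1) = a * x 1 := by simpa using hw1 (x 1) ⟨h01.le, le_refl _⟩
  have wxm : w m = c * m + -(c * L) := hw3 m ⟨le_refl _, hmL.le⟩
  -- the multiplier
  set lam : ℝ → ℝ := fun t => if t ≤ x 1 then a * x 1 else if m ≤ t then c * m + -(c * L) else w t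
    with hlam
  have lam_left : ∀ t, t ≤ x 1 → lam t = a * x 1 := by
    intro t ht; simp [hlam, ht]
  have lam_right : ∀ t, m ≤ t → lam t = c * m + -(c * L) := by
    intro t ht
    by_cases h1 : t ≤ x 1
    · have he : t = x 1 := le_antisymm h1 (h1m.trans ht)
      have he2 : m = x 1 := le_antisymm (ht.trans_eq he) h1m
      rw [lam_left t h1, ← wxm, he2, wx1]
    · simp [hlam, h1, ht]
  have lam_mid : ∀ t ∈ Set.Icc (x 1) m, lam t = w t := by
    rintro t ⟨ht1, ht2⟩
    by_cases h1 : t ≤ x 1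
    · have he : t = x 1 := le_antisymm h1 ht1
      rw [lam_left t h1, he, wx1]
    by_cases h2 : m ≤ t
    · have he : t = m := le_antisymm ht2 h2
      rw [lam_right t h2, he, wxm]
    · simp [hlam, h1, h2]
  -- integrability of w^2 on [x 1, x j]
  have hII : ∀ j, 1 ≤ j → j ≤ n - 1 →
      IntervalIntegrable (fun t => (w t)^2) volume (x 1) (x j) := by
    intro j hj1 hj2
    induction j with
    | zero => omega
    | succ i ih =>
      rcases Nat.lt_or_ge i 1 with h | h
      · have : i = 0 := by omega
        subst this
        exact IntervalIntegrable.refl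
      · have hstep : IntervalIntegrable (fun t => (w t)^2) volume (x i) (x (i+1)) := by
          obtain ⟨p, q, hpq⟩ := hpw i (by omega)
          refine ii_of_eqOn' (key (i+1) (by omega) i (by omega))
            (by fun_prop : Continuous fun t : ℝ => (p * t + q)^2) ?_
          intro t ht
          simp only [hpq t ht]
        exact (ih h (by omega)).trans hstep
  have hIImid : IntervalIntegrable (fun t => (w t)^2) volume (x 1) m :=
    hII (n-1) (by omega) (le_refl _)
  have hIImid_lw : IntervalIntegrable (fun t => lam t * w t) volume (x 1) m := by
    rw [intervalIntegrable_iff_integrableOn_Icc_of_le h1m] at hIImid ⊢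
    exact hIImid.congr_fun (fun t ht => by rw [lam_mid t ht]; ring) measurableSet_Icc
  have hIImid_ll : IntervalIntegrable (fun t => (lam t)^2) volume (x 1) m := by
    rw [intervalIntegrable_iff_integrableOn_Icc_of_le h1m] at hIImid ⊢
    exact hIImid.congr_fun (fun t ht => by rw [lam_mid t ht]) measurableSet_Icc
  -- EqOn rewrites of the middle integrals
  have hmid_lw : ∫ t in (x 1)..m, lam t * w t = ∫ t in (x 1)..m, (w t)^2 := by
    apply intervalIntegral.integral_congr
    intro t ht
    rw [Set.uIcc_of_le h1m] at ht
    show lam t * w t = w t ^ 2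
    rw [lam_mid t ht]; ring
  have hmid_ll : ∫ t in (x 1)..m, (lam t)^2 = ∫ t in (x 1)..m, (w t)^2 := by
    apply intervalIntegral.integral_congr
    intro t ht
    rw [Set.uIcc_of_le h1m] at ht
    show lam t ^ 2 = w t ^ 2
    rw [lam_mid t ht]
  have hMnonneg : 0 ≤ ∫ t in (x 1)..m, (w t)^2 :=
    intervalIntegral.integral_nonneg h1m (fun u _ => sq_nonneg _)
  -- integrability on extreme intervals
  have ii1w : IntervalIntegrable (fun t => (w t)^2) volume 0 (x 1) :=
    ii_of_eqOn' h01.le (by fun_prop : Continuous fun t : ℝ => (a * t + 0)^2)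
      (fun t ht => by rw [hw1 t ht])
  have ii1lw : IntervalIntegrable (fun t => lam t * w t) volume 0 (x 1) :=
    ii_of_eqOn' h01.le (by fun_prop : Continuous fun t : ℝ => (a * x 1) * (a * t + 0))
      (fun t ht => by rw [hw1 t ht, lam_left t ht.2])
  have ii1ll : IntervalIntegrable (fun t => (lam t)^2) volume 0 (x 1) :=
    ii_of_eqOn' h01.le (continuous_const : Continuous fun _ : ℝ => (a * x 1)^2)
      (fun t ht => by rw [lam_left t ht.2])
  have ii3w : IntervalIntegrable (fun t => (w t)^2) volume m L :=
    ii_of_eqOn' hmL.le (by fun_prop : Continuous fun t : ℝ => (c * t + -(c * L))^2)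
      (fun t ht => by rw [hw3 t ht])
  have ii3lw : IntervalIntegrable (fun t => lam t * w t) volume m L :=
    ii_of_eqOn' hmL.le
      (by fun_prop : Continuous fun t : ℝ => (c * m + -(c * L)) * (c * t + -(c * L)))
      (fun t ht => by rw [hw3 t ht, lam_right t ht.1])
  have ii3ll : IntervalIntegrable (fun t => (lam t)^2) volume m L :=
    ii_of_eqOn' hmL.le (continuous_const : Continuous fun _ : ℝ => (c * m + -(c * L))^2)
      (fun t ht => by rw [lam_right t ht.1])
  -- splitting
  have split : ∀ f : ℝ → ℝ, IntervalIntegrable f volume 0 (x 1) →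
      IntervalIntegrable f volume (x 1) m → IntervalIntegrable f volume m L →
      ∫ t in (0:ℝ)..L, f t =
        (∫ t in (0:ℝ)..(x 1), f t) + (∫ t in (x 1)..m, f t) + (∫ t in m..L, f t) := by
    intro f h1 h2 h3
    have e1 := intervalIntegral.integral_add_adjacent_intervals h1 h2
    have e2 := intervalIntegral.integral_add_adjacent_intervals (h1.trans h2) h3
    linarith
  -- explicit values on extreme intervals
  have Ia_w : ∫ t in (0:ℝ)..(x 1), (w t)^2 =
      a^2 * ((x 1)^3 - 0^3)/3 + 0 * ((x 1)^2 - 0^2)/2 + 0 * (x 1 - 0) :=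
    int_eq_poly' h01.le _ _ _ (fun t ht => by rw [hw1 t ht]; ring)
  have Ia_lw : ∫ t in (0:ℝ)..(x 1), lam t * w t =
      0 * ((x 1)^3 - 0^3)/3 + (a^2 * x 1) * ((x 1)^2 - 0^2)/2 + 0 * (x 1 - 0) :=
    int_eq_poly' h01.le _ _ _
      (fun t ht => by rw [hw1 t ht, lam_left t ht.2]; ring)
  have Ia_ll : ∫ t in (0:ℝ)..(x 1), (lam t)^2 =
      0 * ((x 1)^3 - 0^3)/3 + 0 * ((x 1)^2 - 0^2)/2 + (a * x 1)^2 * (x 1 - 0) :=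
    int_eq_poly' h01.le _ _ _ (fun t ht => by rw [lam_left t ht.2]; ring)
  have Ic_w : ∫ t in m..L, (w t)^2 =
      c^2 * (L^3 - m^3)/3 + (-(2 * c^2 * L)) * (L^2 - m^2)/2 + (c*L)^2 * (L - m) :=
    int_eq_poly' hmL.le _ _ _ (fun t ht => by rw [hw3 t ht]; ring)
  have Ic_lw : ∫ t in m..L, lam t * w t =
      0 * (L^3 - m^3)/3 + ((c*m - c*L)*c) * (L^2 - m^2)/2 + ((c*m - c*L) * (-(c*L))) * (L - m) :=
    int_eq_poly' hmL.le _ _ _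
      (fun t ht => by rw [hw3 t ht, lam_right t ht.1]; ring)
  have Ic_ll : ∫ t in m..L, (lam t)^2 =
      0 * (L^3 - m^3)/3 + 0 * (L^2 - m^2)/2 + (c*m - c*L)^2 * (L - m) :=
    int_eq_poly' hmL.le _ _ _ (fun t ht => by rw [lam_right t ht.1]; ring)
  -- totals
  have Eww := split _ ii1w hIImid ii3w
  have Elw := split _ ii1lw hIImid_lw ii3lw
  have Ell := split _ ii1ll hIImid_ll ii3ll
  rw [Ia_w, Ic_w] at Eww
  rw [Ia_lw, Ic_lw, hmid_lw] at Elw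
  rw [Ia_ll, Ic_ll, hmid_ll] at Ell
  have hint1 : (0:ℝ) ≤ (a * x 1)^2 * x 1 := mul_nonneg (sq_nonneg _) h01.le
  have hint2 : (0:ℝ) ≤ (c * (L - m))^2 * (L - m) :=
    mul_nonneg (sq_nonneg _) (sub_nonneg.2 hmL.le)
  have goal1 : (∫ t in (0:ℝ)..L, (w t)^2) ≤ ∫ t in (0:ℝ)..L, lam t * w t := by
    rw [Eww, Elw]; linarith [hint1, hint2, hMnonneg]
  have goal2 : (∫ t in (0:ℝ)..L, (lam t)^2) ≤ 3 * ∫ t in (0:ℝ)..L, (w t)^2 := by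
    rw [Eww, Ell]; linarith [hint1, hint2, hMnonneg]
  have hIww_nonneg : 0 ≤ ∫ t in (0:ℝ)..L, (w t)^2 := by
    rw [Eww]; linarith [hint1, hint2, hMnonneg]
  refine ⟨lam, ⟨?_, ?_, ?_⟩, goal1, ?_, ?_⟩
  · -- constant on first interval
    intro t ht
    rw [hx0] at ht
    rw [lam_left t ht.2, lam_left (x 1) (le_refl _)]
  · -- constant on last interval
    intro t ht
    rw [hxn] at ht
    rw [lam_right t ht.1, lam_right m (le_refl _)]
  · -- affine on interior intervals
    intro k hk1 hk2
    obtain ⟨p, q, hpq⟩ := hpw k (by omega)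
    refine ⟨p, q, fun t ht => ?_⟩
    have hsub : t ∈ Set.Icc (x 1) m :=
      ⟨(key k (by omega) 1 hk1).trans ht.1, ht.2.trans (key (n-1) (by omega) (k+1) (by omega))⟩
    rw [lam_mid t hsub, hpq t ht]
  · -- L² bound
    rw [Real.sq_sqrt (by norm_num : (0:ℝ) ≤ 3)]
    exact goal2
  · -- consequence
    have h1 : Real.sqrt (∫ t in (0:ℝ)..L, (lam t)^2) ≤
        Real.sqrt 3 * Real.sqrt (∫ t in (0:ℝ)..L, (w t)^2) := by
      rw [← Real.sqrt_mul (by norm_num : (0:ℝ) ≤ 3)]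
      exact Real.sqrt_le_sqrt goal2
    have hs3 : (0:ℝ) < Real.sqrt 3 := Real.sqrt_pos.2 (by norm_num)
    calc 1 / Real.sqrt 3 * Real.sqrt (∫ t in (0:ℝ)..L, (lam t)^2)
          * Real.sqrt (∫ t in (0:ℝ)..L, (w t)^2)
        ≤ 1 / Real.sqrt 3 * (Real.sqrt 3 * Real.sqrt (∫ t in (0:ℝ)..L, (w t)^2))
          * Real.sqrt (∫ t in (0:ℝ)..L, (w t)^2) := by
          apply mul_le_mul_of_nonneg_right _ (Real.sqrt_nonneg _)
          exact mul_le_mul_of_nonneg_left h1 (by positivity)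
      _ = Real.sqrt (∫ t in (0:ℝ)..L, (w t)^2) * Real.sqrt (∫ t in (0:ℝ)..L, (w t)^2) := by
          field_simp
      _ = ∫ t in (0:ℝ)..L, (w t)^2 := Real.mul_self_sqrt hIww_nonneg
      _ ≤ ∫ t in (0:ℝ)..L, lam t * w t := goal1
end

section
/- The projector π_h : L²(γ) → W_h defined by ∫_γ λ_h(π_h η − η) = 0 for all λ_h ∈ Λ_h is uniformly H^{1/2}-stable: ‖π_h η‖_{1/2,γ} ≤ C ‖η‖_{1/2,γ} for all η ∈ H^{1/2}_{00}(γ), with C independent of h. -/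
/- STATEMENT 9: Uniform H^{1/2}-stability of the projector π_h:
‖π_h η‖_{1/2,γ} ≤ C‖η‖_{1/2,γ} with C independent of h.
Here `X` models H^{1/2}_{00}(γ) (norm ‖·‖ = ‖·‖_{1/2,γ}), `Hl` models L²(γ) with
the embedding ι (so ‖ι x‖ is the L² norm), `W` the finite element space W_h,
`pih` = π_h, `pihat` = the H^{1/2}-projection π̂_h. The available ingredients are
(i) ‖η − π_h η‖_{0,γ} ≤ C₁ h^{1/2}‖η‖_{1/2,γ},
(ii) ‖η − π̂_h η‖_{0,γ} ≤ C₂ h^{1/2}‖η‖_{1/2,γ} and ‖π̂_h η‖_{1/2,γ} ≤ C₃‖η‖_{1/2,γ},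
(iii) the inverse inequality ‖w_h‖_{1/2,γ} ≤ C₄ h^{−1/2}‖w_h‖_{0,γ} for w_h ∈ W_h.
The resulting constant C₃ + C₄(C₁+C₂) is independent of h. -/
theorem stmt_9 {X Hl : Type*} [NormedAddCommGroup X] [NormedSpace ℝ X]
    [NormedAddCommGroup Hl] [NormedSpace ℝ Hl]
    (ι : X →ₗ[ℝ] Hl) (W : Submodule ℝ X) (pih pihat : X → X)
    (h C1 C2 C3 C4 : ℝ) (hh : 0 < h)
    (hC1 : 0 < C1) (hC2 : 0 < C2) (hC3 : 0 < C3) (hC4 : 0 < C4)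
    (hpihW : ∀ η : X, pih η ∈ W) (hpihatW : ∀ η : X, pihat η ∈ W)
    (hquasi : ∀ η : X, ‖ι (η - pih η)‖ ≤ C1 * Real.sqrt h * ‖η‖)
    (hL2hat : ∀ η : X, ‖ι (η - pihat η)‖ ≤ C2 * Real.sqrt h * ‖η‖)
    (hstabhat : ∀ η : X, ‖pihat η‖ ≤ C3 * ‖η‖)
    (hinv : ∀ w ∈ W, ‖w‖ ≤ C4 * (Real.sqrt h)⁻¹ * ‖ι w‖) :
    ∀ η : X, ‖pih η‖ ≤ (C3 + C4 * (C1 + C2)) * ‖η‖ := by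
  intro η
  have hs : (0:ℝ) < Real.sqrt h := Real.sqrt_pos.mpr hh
  have hmem : pih η - pihat η ∈ W := W.sub_mem (hpihW η) (hpihatW η)
  have h1 : ‖ι (pih η - pihat η)‖ ≤ (C1 + C2) * Real.sqrt h * ‖η‖ := by
    have : pih η - pihat η = (η - pihat η) - (η - pih η) := by abel
    rw [this, map_sub]
    calc ‖ι (η - pihat η) - ι (η - pih η)‖
        ≤ ‖ι (η - pihat η)‖ + ‖ι (η - pih η)‖ := norm_sub_le _ _
      _ ≤ C2 * Real.sqrt h * ‖η‖ + C1 * Real.sqrt h * ‖η‖ := add_le_add (hL2hat η) (hquasi η)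
      _ = (C1 + C2) * Real.sqrt h * ‖η‖ := by ring
  have h2 : ‖pih η - pihat η‖ ≤ C4 * (C1 + C2) * ‖η‖ := by
    calc ‖pih η - pihat η‖ ≤ C4 * (Real.sqrt h)⁻¹ * ‖ι (pih η - pihat η)‖ := hinv _ hmem
      _ ≤ C4 * (Real.sqrt h)⁻¹ * ((C1 + C2) * Real.sqrt h * ‖η‖) := by
          apply mul_le_mul_of_nonneg_left h1
          positivity
      _ = C4 * (C1 + C2) * ‖η‖ := by field_simp
  calc ‖pih η‖ = ‖pihat η + (pih η - pihat η)‖ := by rw [add_sub_cancel]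
    _ ≤ ‖pihat η‖ + ‖pih η - pihat η‖ := norm_add_le _ _
    _ ≤ C3 * ‖η‖ + C4 * (C1 + C2) * ‖η‖ := add_le_add (hstabhat η) h2
    _ = (C3 + C4 * (C1 + C2)) * ‖η‖ := by ring
end

section
/- The Robin-coupled variational problem — find (u,λ) ∈ V × Q with a(u,v) − b(λ,v) = ∫_γ ρ v_γ for all v ∈ V, and b(μ,u) + α c(λ,μ) = 0 for all μ ∈ Q, where c(λ,μ) = Σ_i ∫_γ λ_i μ_i and α > 0 — has a unique solution, and there is a constant C independent of α such that ‖u‖²_V + ‖λ‖²_Λ + α‖λ‖²_Q ≤ C‖ρ‖²_{L²(γ)}. -/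
/-!
The system is the variational equation of the form
`B((u, λ), (v, μ)) = a(u, v) - b(ιλ, v) + b(ιμ, u) + α ⟪λ, μ⟫` on `V × Q`, whose `b`-terms cancel on
the diagonal, so `B` is coercive with constant `min α₂ α` and Lax–Milgram gives existence.
Testing the equations with `(u, λ)` itself gives the energy identity `a(u, u) + α ‖λ‖² = F(u)`,
which yields uniqueness and bounds `‖u‖` and `α ‖λ‖²` by multiples of `‖F‖` not depending on `α`.
The `Λ`-norm of `ιλ` is then controlled by the inf-sup condition, because `b(ιλ, ·) = a(u, ·) - F`.
-/

open RealInnerProductSpace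

theorem IsCoercive.exists_forall_apply_eq {E : Type*} [NormedAddCommGroup E]
    [InnerProductSpace ℝ E] [CompleteSpace E] {B : E →L[ℝ] E →L[ℝ] ℝ} (hB : IsCoercive B)
    (f : E →L[ℝ] ℝ) : ∃ x, ∀ w, B x w = f w :=
  ⟨hB.continuousLinearEquivOfBilin.symm ((InnerProductSpace.toDual ℝ E).symm f), fun w => by
    rw [← hB.continuousLinearEquivOfBilin_apply, ContinuousLinearEquiv.apply_symm_apply,
      InnerProductSpace.toDual_symm_apply]⟩

theorem LinearMap.norm_apply_apply_le_of_apply_apply_le {E F : Type*} [NormedAddCommGroup E]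
    [NormedSpace ℝ E] [NormedAddCommGroup F] [NormedSpace ℝ F] {f : E →ₗ[ℝ] F →ₗ[ℝ] ℝ} {C : ℝ}
    (h : ∀ x y, f x y ≤ C * ‖x‖ * ‖y‖) (x : E) (y : F) : ‖f x y‖ ≤ C * ‖x‖ * ‖y‖ := by
  refine abs_le.2 ⟨?_, h x y⟩
  have := h (-x) y
  simp only [map_neg, LinearMap.neg_apply, norm_neg] at this
  linarith

section PerturbedSaddlePoint

variable {V Q : Type*} [NormedAddCommGroup V] [InnerProductSpace ℝ V]
  [NormedAddCommGroup Q] [InnerProductSpace ℝ Q]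
  {A : V →L[ℝ] V →L[ℝ] ℝ} {D : Q →L[ℝ] V →L[ℝ] ℝ} {α c : ℝ} {F : V →L[ℝ] ℝ}

variable (A D α F) in
def IsPerturbedSaddlePoint (u : V) (p : Q) : Prop :=
  (∀ v, A u v - D p v = F v) ∧ ∀ μ, D μ u + α * ⟪p, μ⟫ = 0

variable (A D α) in
noncomputable def perturbedSaddleForm : WithLp 2 (V × Q) →L[ℝ] WithLp 2 (V × Q) →L[ℝ] ℝ :=
  A.bilinearComp (WithLp.fstL 2 ℝ V Q) (WithLp.fstL 2 ℝ V Q)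
    - D.bilinearComp (WithLp.sndL 2 ℝ V Q) (WithLp.fstL 2 ℝ V Q)
    + D.flip.bilinearComp (WithLp.fstL 2 ℝ V Q) (WithLp.sndL 2 ℝ V Q)
    + α • (show Q →L[ℝ] Q →L[ℝ] ℝ from innerSL ℝ).bilinearComp
      (WithLp.sndL 2 ℝ V Q) (WithLp.sndL 2 ℝ V Q)

theorem perturbedSaddleForm_apply (x y : WithLp 2 (V × Q)) :
    perturbedSaddleForm A D α x y =
      A x.fst y.fst - D x.snd y.fst + D y.snd x.fst + α * ⟪x.snd, y.snd⟫ := rfl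

theorem isCoercive_perturbedSaddleForm (hc : 0 < c) (hA : ∀ u, c * ‖u‖ ^ 2 ≤ A u u)
    (hα : 0 < α) : IsCoercive (perturbedSaddleForm A D α) := by
  refine ⟨min c α, lt_min hc hα, fun x => ?_⟩
  have hx := WithLp.prod_norm_sq_eq_of_L2 x
  rw [perturbedSaddleForm_apply, real_inner_self_eq_norm_sq]
  nlinarith [hA x.fst, min_le_left c α, min_le_right c α, sq_nonneg ‖x.fst‖, sq_nonneg ‖x.snd‖]

namespace IsPerturbedSaddlePoint

variable {u u' : V} {p p' : Q} {F' : V →L[ℝ] ℝ}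

theorem energy_eq (h : IsPerturbedSaddlePoint A D α F u p) : A u u + α * ‖p‖ ^ 2 = F u := by
  have h₂ := h.2 p
  rw [real_inner_self_eq_norm_sq] at h₂
  linarith [h.1 u]

theorem sub (h : IsPerturbedSaddlePoint A D α F u p) (h' : IsPerturbedSaddlePoint A D α F' u' p') :
    IsPerturbedSaddlePoint A D α (F - F') (u - u') (p - p') :=
  ⟨fun v => by simp only [map_sub, sub_apply]; linarith [h.1 v, h'.1 v],
    fun μ => by simp only [map_sub, inner_sub_left]; linarith [h.2 μ, h'.2 μ]⟩

theorem unique (hc : 0 < c) (hA : ∀ u, c * ‖u‖ ^ 2 ≤ A u u) (hα : 0 < α)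
    (h : IsPerturbedSaddlePoint A D α F u p) (h' : IsPerturbedSaddlePoint A D α F u' p') :
    u = u' ∧ p = p' := by
  have henergy := (h.sub h').energy_eq
  rw [sub_self, zero_apply] at henergy
  have hu := hA (u - u')
  have hu0 : ‖u - u'‖ ^ 2 = 0 := by nlinarith [sq_nonneg ‖u - u'‖, sq_nonneg ‖p - p'‖]
  have hp0 : ‖p - p'‖ ^ 2 = 0 := by nlinarith [sq_nonneg ‖u - u'‖, sq_nonneg ‖p - p'‖]
  exact ⟨by simpa [sub_eq_zero] using hu0, by simpa [sub_eq_zero] using hp0⟩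

theorem norm_le (hc : 0 < c) (hA : ∀ u, c * ‖u‖ ^ 2 ≤ A u u) (hα : 0 ≤ α)
    (h : IsPerturbedSaddlePoint A D α F u p) : ‖u‖ ≤ ‖F‖ / c := by
  rw [le_div_iff₀ hc]
  rcases (norm_nonneg u).eq_or_lt with hu | hu
  · rw [← hu, zero_mul]; exact norm_nonneg F
  refine le_of_mul_le_mul_right ?_ hu
  calc ‖u‖ * c * ‖u‖ = c * ‖u‖ ^ 2 := by ring
    _ ≤ A u u + α * ‖p‖ ^ 2 := by nlinarith [hA u]
    _ = F u := h.energy_eq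
    _ ≤ ‖F‖ * ‖u‖ := (le_abs_self _).trans (F.le_opNorm u)

theorem mul_norm_sq_le (hc : 0 < c) (hA : ∀ u, c * ‖u‖ ^ 2 ≤ A u u) (hα : 0 ≤ α)
    (h : IsPerturbedSaddlePoint A D α F u p) : α * ‖p‖ ^ 2 ≤ ‖F‖ ^ 2 / c :=
  calc α * ‖p‖ ^ 2 ≤ A u u + α * ‖p‖ ^ 2 := by nlinarith [hA u]
    _ = F u := h.energy_eq
    _ ≤ ‖F‖ * ‖u‖ := (le_abs_self _).trans (F.le_opNorm u)
    _ ≤ ‖F‖ * (‖F‖ / c) := by gcongr; exact h.norm_le hc hA hα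
    _ = ‖F‖ ^ 2 / c := by ring

end IsPerturbedSaddlePoint

variable (F) in
theorem exists_isPerturbedSaddlePoint [CompleteSpace V] [CompleteSpace Q] (hc : 0 < c)
    (hA : ∀ u, c * ‖u‖ ^ 2 ≤ A u u) (hα : 0 < α) :
    ∃ u p, IsPerturbedSaddlePoint A D α F u p := by
  obtain ⟨x, hx⟩ := (isCoercive_perturbedSaddleForm (D := D) hc hA hα).exists_forall_apply_eq
    (F.comp (WithLp.fstL 2 ℝ V Q))
  refine ⟨x.fst, x.snd, fun v => ?_, fun μ => ?_⟩
  · simpa [perturbedSaddleForm_apply] using hx (WithLp.toLp 2 (v, 0))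
  · simpa [perturbedSaddleForm_apply] using hx (WithLp.toLp 2 (0, μ))

variable (F) in
theorem existsUnique_isPerturbedSaddlePoint [CompleteSpace V] [CompleteSpace Q] (hc : 0 < c)
    (hA : ∀ u, c * ‖u‖ ^ 2 ≤ A u u) (hα : 0 < α) :
    ∃! x : V × Q, IsPerturbedSaddlePoint A D α F x.1 x.2 := by
  obtain ⟨u, p, h⟩ := exists_isPerturbedSaddlePoint (D := D) F hc hA hα
  refine ⟨(u, p), h, fun x hx => ?_⟩
  obtain ⟨hu, hp⟩ := hx.unique hc hA hα h
  exact Prod.ext hu hp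

end PerturbedSaddlePoint

theorem mul_norm_le_of_infSup {V Λ : Type*} [NormedAddCommGroup V] [NormedSpace ℝ V] [Norm Λ]
    {b : Λ → V → ℝ} {β : ℝ} {μ : Λ} (hinf : ∀ ε > 0, ∃ v : V, ‖v‖ ≤ 1 ∧ β * ‖μ‖ - ε ≤ b μ v)
    {A : V →L[ℝ] V →L[ℝ] ℝ} {F : V →L[ℝ] ℝ} {u : V} (hb : ∀ v, b μ v = A u v - F v) :
    β * ‖μ‖ ≤ ‖A‖ * ‖u‖ + ‖F‖ := by
  refine le_of_forall_pos_le_add fun ε hε => ?_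
  obtain ⟨v, hv, hβ⟩ := hinf ε hε
  have hAv : A u v ≤ ‖A‖ * ‖u‖ * ‖v‖ := (le_abs_self _).trans (A.le_opNorm₂ u v)
  have hFv : -F v ≤ ‖F‖ * ‖v‖ := (neg_le_abs _).trans (F.le_opNorm v)
  have hAu : 0 ≤ ‖A‖ * ‖u‖ := by positivity
  rw [hb] at hβ
  nlinarith [norm_nonneg F]

theorem stmt_13_general {V Lam Q : Type*}
    [NormedAddCommGroup V] [InnerProductSpace ℝ V] [CompleteSpace V]
    [NormedAddCommGroup Lam] [NormedSpace ℝ Lam]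
    [NormedAddCommGroup Q] [InnerProductSpace ℝ Q] [CompleteSpace Q]
    (ι : Q →ₗ[ℝ] Lam)
    (Cι : ℝ) (hιb : ∀ q : Q, ‖ι q‖ ≤ Cι * ‖q‖)
    (a : V →ₗ[ℝ] V →ₗ[ℝ] ℝ) (b : Lam →ₗ[ℝ] V →ₗ[ℝ] ℝ)
    (α₁ α₂ β M : ℝ) (hα₁ : 0 < α₁) (hα₂ : 0 < α₂) (hβ : 0 < β) (hM : 0 < M)
    (ha_cont : ∀ u v : V, a u v ≤ α₁ * ‖u‖ * ‖v‖)
    (ha_coer : ∀ u : V, α₂ * ‖u‖ ^ 2 ≤ a u u)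
    (hb_cont : ∀ (μ : Lam) (v : V), b μ v ≤ M * ‖μ‖ * ‖v‖)
    (hb_infsup : ∀ μ : Lam, ∀ ε > 0, ∃ v : V, ‖v‖ ≤ 1 ∧ β * ‖μ‖ - ε ≤ b μ v) :
    ∃ C : ℝ, 0 < C ∧ ∀ α : ℝ, 0 < α → ∀ (F : V →L[ℝ] ℝ) (R : ℝ), ‖F‖ ≤ R →
      (∃! p : V × Q, (∀ v : V, a p.1 v - b (ι p.2) v = F v) ∧
          (∀ μ : Q, b (ι μ) p.1 + α * (inner ℝ p.2 μ : ℝ) = 0)) ∧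
      (∀ (u : V) (lam : Q),
        (∀ v : V, a u v - b (ι lam) v = F v) →
        (∀ μ : Q, b (ι μ) u + α * (inner ℝ lam μ : ℝ) = 0) →
        ‖u‖ ^ 2 + ‖ι lam‖ ^ 2 + α * ‖lam‖ ^ 2 ≤ C * R ^ 2) := by
  set A : V →L[ℝ] V →L[ℝ] ℝ :=
    a.mkContinuous₂ α₁ (a.norm_apply_apply_le_of_apply_apply_le ha_cont)
  set D : Q →L[ℝ] V →L[ℝ] ℝ := (b ∘ₗ ι).mkContinuous₂ (M * Cι) fun q v =>
    calc ‖b (ι q) v‖ ≤ M * ‖ι q‖ * ‖v‖ := b.norm_apply_apply_le_of_apply_apply_le hb_cont _ _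
      _ ≤ M * (Cι * ‖q‖) * ‖v‖ := by gcongr; exact hιb q
      _ = M * Cι * ‖q‖ * ‖v‖ := by ring
  have hA : ‖A‖ ≤ α₁ := LinearMap.mkContinuous₂_norm_le _ hα₁.le _
  refine ⟨1 / α₂ ^ 2 + ((α₁ / α₂ + 1) / β) ^ 2 + 1 / α₂, by positivity, fun α hα F R hFR =>
    ⟨existsUnique_isPerturbedSaddlePoint (A := A) (D := D) F hα₂ ha_coer hα, fun u p h₁ h₂ => ?_⟩⟩
  have h : IsPerturbedSaddlePoint A D α F u p := ⟨h₁, h₂⟩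
  have hu : ‖u‖ ≤ R / α₂ := (h.norm_le hα₂ ha_coer hα.le).trans (by gcongr)
  have hp : α * ‖p‖ ^ 2 ≤ R ^ 2 / α₂ := (h.mul_norm_sq_le hα₂ ha_coer hα.le).trans (by gcongr)
  have hιp : β * ‖ι p‖ ≤ α₁ * (R / α₂) + R :=
    calc β * ‖ι p‖ ≤ ‖A‖ * ‖u‖ + ‖F‖ :=
          mul_norm_le_of_infSup (b := fun μ v => b μ v) (hb_infsup (ι p)) fun v => by
            simp only [A, LinearMap.mkContinuous₂_apply]
            linarith [h₁ v]
      _ ≤ α₁ * (R / α₂) + R := by gcongr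
  calc ‖u‖ ^ 2 + ‖ι p‖ ^ 2 + α * ‖p‖ ^ 2
      ≤ (R / α₂) ^ 2 + ((α₁ * (R / α₂) + R) / β) ^ 2 + R ^ 2 / α₂ := by
        gcongr
        rwa [le_div_iff₀' hβ]
    _ = (1 / α₂ ^ 2 + ((α₁ / α₂ + 1) / β) ^ 2 + 1 / α₂) * R ^ 2 := by ring

theorem stmt_13 {V Lam Q : Type*}
    [NormedAddCommGroup V] [InnerProductSpace ℝ V] [CompleteSpace V]
    [NormedAddCommGroup Lam] [NormedSpace ℝ Lam]
    [NormedAddCommGroup Q] [InnerProductSpace ℝ Q] [CompleteSpace Q]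
    (ι : Q →ₗ[ℝ] Lam) (hι : Function.Injective ι)
    (Cι : ℝ) (hCι : 0 < Cι) (hιb : ∀ q : Q, ‖ι q‖ ≤ Cι * ‖q‖)
    (a : V →ₗ[ℝ] V →ₗ[ℝ] ℝ) (b : Lam →ₗ[ℝ] V →ₗ[ℝ] ℝ)
    (α₁ α₂ β M : ℝ) (hα₁ : 0 < α₁) (hα₂ : 0 < α₂) (hβ : 0 < β) (hM : 0 < M)
    (ha_cont : ∀ u v : V, a u v ≤ α₁ * ‖u‖ * ‖v‖)
    (ha_coer : ∀ u : V, α₂ * ‖u‖ ^ 2 ≤ a u u)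
    (hb_cont : ∀ (μ : Lam) (v : V), b μ v ≤ M * ‖μ‖ * ‖v‖)
    (hb_infsup : ∀ μ : Lam, ∀ ε > 0, ∃ v : V, ‖v‖ ≤ 1 ∧ β * ‖μ‖ - ε ≤ b μ v) :
    ∃ C : ℝ, 0 < C ∧ ∀ α : ℝ, 0 < α → ∀ (F : V →L[ℝ] ℝ) (R : ℝ), ‖F‖ ≤ R →
      (∃! p : V × Q, (∀ v : V, a p.1 v - b (ι p.2) v = F v) ∧
          (∀ μ : Q, b (ι μ) p.1 + α * (inner ℝ p.2 μ : ℝ) = 0)) ∧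
      (∀ (u : V) (lam : Q),
        (∀ v : V, a u v - b (ι lam) v = F v) →
        (∀ μ : Q, b (ι μ) u + α * (inner ℝ lam μ : ℝ) = 0) →
        ‖u‖ ^ 2 + ‖ι lam‖ ^ 2 + α * ‖lam‖ ^ 2 ≤ C * R ^ 2) :=
  stmt_13_general ι Cι hιb a b α₁ α₂ β M hα₁ hα₂ hβ hM ha_cont ha_coer hb_cont hb_infsup
end

section
/- For the Galerkin discretization of the Robin-coupled problem with V_h ⊂ V and Λ_h ⊂ Q, the error satisfies, with C independent of α: ‖u−u_h‖²_V + ‖λ−λ_h‖²_Λ + α‖λ−λ_h‖²_Q ≤ C(inf_{v_h∈V_h}‖u−v_h‖²_V + inf_{μ_h∈Λ_h}‖λ−μ_h‖²_Λ + α inf_{μ_h∈Λ_h}‖λ−μ_h‖²_Q). -/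
/-!
Galerkin orthogonality and coercivity of `a(·,·) + α c(·,·)` on `V × Q` bound
`‖u - u_h‖²_V + α ‖λ - λ_h‖²_Q` by the best-approximation errors plus the coupling term
`M ‖λ - λ_h‖_Λ ‖u - v_h‖_V`. The discrete inf-sup condition, tested with `μ_h - λ_h`, bounds
`β ‖λ - λ_h‖_Λ` by `α₁ ‖u - u_h‖_V + (M + β) ‖λ - μ_h‖_Λ` with no dependence on `α`. Inserting this
into the coupling term and absorbing with Young's inequality gives the uniform estimate.
-/

theorem mul_le_div_four_mul_sq_add_sq_div {c : ℝ} (hc : 0 < c) (x y : ℝ) :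
    x * y ≤ c / 4 * x ^ 2 + y ^ 2 / c := by
  have key : c / 4 * x ^ 2 + y ^ 2 / c - x * y = (c / 2 * x - y) ^ 2 / c := by
    field_simp; ring
  linarith [div_nonneg (sq_nonneg (c / 2 * x - y)) hc.le]

theorem mul_le_of_forall_exists_norm_le_one {E : Type*} [SeminormedAddCommGroup E] {S : Set E}
    {f : E → ℝ} {β t K : ℝ} (hK : 0 ≤ K)
    (hinf : ∀ ε > 0, ∃ w ∈ S, ‖w‖ ≤ 1 ∧ β * t - ε ≤ f w) (hf : ∀ w ∈ S, f w ≤ K * ‖w‖) :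
    β * t ≤ K := by
  refine le_of_forall_pos_le_add fun ε hε => ?_
  obtain ⟨w, hwS, hw, hfw⟩ := hinf ε hε
  nlinarith [hf w hwS, mul_le_mul_of_nonneg_left hw hK]

theorem LinearMap.abs_apply₂_le {E F : Type*} [SeminormedAddCommGroup E] [Module ℝ E]
    [SeminormedAddCommGroup F] [Module ℝ F] {B : E →ₗ[ℝ] F →ₗ[ℝ] ℝ} {K : ℝ}
    (hB : ∀ x y, B x y ≤ K * ‖x‖ * ‖y‖) (x : E) (y : F) : |B x y| ≤ K * ‖x‖ * ‖y‖ := by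
  refine abs_le.mpr ⟨?_, hB x y⟩
  have := hB (-x) y
  simp only [map_neg, LinearMap.neg_apply, norm_neg] at this
  linarith

theorem weighted_sq_le_of_energy_of_infsup {α₁ α₂ M β α X Y Z p q r : ℝ} (hα₂ : 0 < α₂)
    (hM : 0 ≤ M) (hβ : 0 < β) (hα : 0 ≤ α) (hp : 0 ≤ p)
    (hA : α₂ * X ^ 2 + α * Y ^ 2 ≤ α₁ * X * p + α * (Y * r) + M * Z * p + M * q * X)
    (hB : β * Z ≤ α₁ * X + (M + β) * q) :
    α₂ * X ^ 2 + α * Y ^ 2 ≤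
      (2 * (α₁ * (M + β) / β) ^ 2 / α₂ + M * (M + β) / β) * p ^ 2 +
        (2 * M ^ 2 / α₂ + M * (M + β) / β) * q ^ 2 + α * r ^ 2 := by
  set γ := α₁ * (M + β) / β
  set κ := M * (M + β) / β
  have hκ : 0 ≤ κ := by positivity
  have hZ : M * Z * p ≤ (γ - α₁) * X * p + κ * q * p := by
    have hMZ : M * Z ≤ (γ - α₁) * X + κ * q := by
      have hexpand : β * ((γ - α₁) * X + κ * q) = M * (α₁ * X + (M + β) * q) := by
        simp only [γ, κ]; field_simp; ring
      nlinarith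
    nlinarith [mul_le_mul_of_nonneg_right hMZ hp]
  have young₁ := mul_le_div_four_mul_sq_add_sq_div hα₂ X (γ * p)
  have young₂ := mul_le_div_four_mul_sq_add_sq_div hα₂ X (M * q)
  have young₃ := mul_le_mul_of_nonneg_left (two_mul_le_add_sq q p) hκ
  have young₄ := mul_le_mul_of_nonneg_left (two_mul_le_add_sq Y r) hα
  linear_combination 2 * hA + 2 * hZ + 2 * young₁ + 2 * young₂ + young₃ + young₄

theorem exists_const_sq_le_of_energy_of_infsup {α₁ α₂ M β : ℝ} (hα₂ : 0 < α₂) (hM : 0 ≤ M)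
    (hβ : 0 < β) :
    ∃ C > 0, ∀ α X Y Z p q r : ℝ, 0 ≤ α → 0 ≤ Z → 0 ≤ p →
      α₂ * X ^ 2 + α * Y ^ 2 ≤ α₁ * X * p + α * (Y * r) + M * Z * p + M * q * X →
      β * Z ≤ α₁ * X + (M + β) * q →
      X ^ 2 + Z ^ 2 + α * Y ^ 2 ≤ C * (p ^ 2 + q ^ 2 + α * r ^ 2) := by
  set A := 2 * (α₁ * (M + β) / β) ^ 2 / α₂ + M * (M + β) / β
  set B := 2 * M ^ 2 / α₂ + M * (M + β) / β
  set c := 1 + 2 * α₁ ^ 2 / β ^ 2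
  refine ⟨(c / α₂ + 1) * (A + B + 1) + 2 * (M + β) ^ 2 / β ^ 2, by positivity, ?_⟩
  intro α X Y Z p q r hα hZ hp hA hB
  set D := p ^ 2 + q ^ 2 + α * r ^ 2
  have hR : α₂ * X ^ 2 + α * Y ^ 2 ≤ (A + B + 1) * D := by
    have hαr : 0 ≤ α * r ^ 2 := by positivity
    have hA₀ : 0 ≤ A := by positivity
    have hB₀ : 0 ≤ B := by positivity
    nlinarith [weighted_sq_le_of_energy_of_infsup hα₂ hM hβ hα hp hA hB, sq_nonneg p, sq_nonneg q]
  have hX : X ^ 2 ≤ (A + B + 1) * D / α₂ := by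
    rw [le_div_iff₀ hα₂]; nlinarith [mul_nonneg hα (sq_nonneg Y)]
  have hY : α * Y ^ 2 ≤ (A + B + 1) * D := by nlinarith [sq_nonneg X]
  have hZ₂ : Z ^ 2 ≤ 2 * α₁ ^ 2 / β ^ 2 * X ^ 2 + 2 * (M + β) ^ 2 / β ^ 2 * q ^ 2 := by
    have hsq := (pow_le_pow_left₀ (mul_nonneg hβ.le hZ) hB 2).trans add_sq_le
    have e : 2 * α₁ ^ 2 / β ^ 2 * X ^ 2 + 2 * (M + β) ^ 2 / β ^ 2 * q ^ 2 =
        2 * ((α₁ * X) ^ 2 + ((M + β) * q) ^ 2) / β ^ 2 := by ring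
    rw [e, le_div_iff₀ (by positivity)]
    linarith
  have hq : q ^ 2 ≤ D := by nlinarith [mul_nonneg hα (sq_nonneg r), sq_nonneg p]
  calc X ^ 2 + Z ^ 2 + α * Y ^ 2
      ≤ c * X ^ 2 + 2 * (M + β) ^ 2 / β ^ 2 * q ^ 2 + α * Y ^ 2 := by linarith
    _ ≤ c * ((A + B + 1) * D / α₂) + 2 * (M + β) ^ 2 / β ^ 2 * D + (A + B + 1) * D := by
        gcongr
    _ = ((c / α₂ + 1) * (A + B + 1) + 2 * (M + β) ^ 2 / β ^ 2) * D := by ring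

section RobinCoupled

variable {V Lam Q : Type*} [NormedAddCommGroup V] [NormedSpace ℝ V]
  [NormedAddCommGroup Lam] [NormedSpace ℝ Lam] [NormedAddCommGroup Q] [InnerProductSpace ℝ Q]
  {ι : Q →ₗ[ℝ] Lam} {a : V →ₗ[ℝ] V →ₗ[ℝ] ℝ} {b : Lam →ₗ[ℝ] V →ₗ[ℝ] ℝ}
  {Vh : Submodule ℝ V} {Lh : Submodule ℝ Q} {u uh : V} {lam lamh : Q}

theorem galerkin_orthogonality_fst {F : V → ℝ}
    (hc : ∀ v, a u v - b (ι lam) v = F v) (hd : ∀ vh ∈ Vh, a uh vh - b (ι lamh) vh = F vh) :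
    ∀ w ∈ Vh, a (u - uh) w = b (ι (lam - lamh)) w := by
  intro w hw
  have := hc w
  have := hd w hw
  simp only [map_sub, LinearMap.sub_apply]
  linarith

theorem galerkin_orthogonality_snd {α : ℝ}
    (hc : ∀ μ : Q, b (ι μ) u + α * inner ℝ lam μ = 0)
    (hd : ∀ μh ∈ Lh, b (ι μh) uh + α * inner ℝ lamh μh = 0) :
    ∀ μ ∈ Lh, b (ι μ) (u - uh) + α * inner ℝ (lam - lamh) μ = 0 := by
  intro μ hμ
  have := hc μ
  have := hd μ hμ
  simp only [map_sub, inner_sub_left]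
  linarith

theorem infsup_error_bound {α₁ M β : ℝ} (hα₁ : 0 ≤ α₁) (hM : 0 ≤ M) (hβ : 0 ≤ β)
    (ha_cont : ∀ u v : V, a u v ≤ α₁ * ‖u‖ * ‖v‖)
    (hb_cont : ∀ (μ : Lam) (v : V), b μ v ≤ M * ‖μ‖ * ‖v‖)
    (hb_infsup_h : ∀ μh ∈ Lh, ∀ ε > 0,
      ∃ vh ∈ Vh, ‖vh‖ ≤ 1 ∧ β * ‖ι μh‖ - ε ≤ b (ι μh) vh)
    (horth : ∀ w ∈ Vh, a (u - uh) w = b (ι (lam - lamh)) w)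
    (hlamh : lamh ∈ Lh) {μh : Q} (hμh : μh ∈ Lh) :
    β * ‖ι (lam - lamh)‖ ≤ α₁ * ‖u - uh‖ + (M + β) * ‖ι (lam - μh)‖ := by
  have hdisc : β * ‖ι (μh - lamh)‖ ≤ α₁ * ‖u - uh‖ + M * ‖ι (lam - μh)‖ := by
    refine mul_le_of_forall_exists_norm_le_one (by positivity)
      (hb_infsup_h _ (Lh.sub_mem hμh hlamh)) fun w hw => ?_
    have hsplit : b (ι (μh - lamh)) w = a (u - uh) w - b (ι (lam - μh)) w := by
      rw [horth w hw]; simp only [map_sub, LinearMap.sub_apply]; ring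
    rw [hsplit]
    linarith [ha_cont (u - uh) w, neg_abs_le (b (ι (lam - μh)) w),
      LinearMap.abs_apply₂_le hb_cont (ι (lam - μh)) w]
  have htri : ‖ι (lam - lamh)‖ ≤ ‖ι (lam - μh)‖ + ‖ι (μh - lamh)‖ := by
    rw [← sub_add_sub_cancel lam μh lamh, map_add]
    exact norm_add_le _ _
  linarith [mul_le_mul_of_nonneg_left htri hβ]

theorem energy_error_bound {α₁ α₂ M α : ℝ} (hα : 0 ≤ α)
    (ha_cont : ∀ u v : V, a u v ≤ α₁ * ‖u‖ * ‖v‖)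
    (ha_coer : ∀ u : V, α₂ * ‖u‖ ^ 2 ≤ a u u)
    (hb_cont : ∀ (μ : Lam) (v : V), b μ v ≤ M * ‖μ‖ * ‖v‖)
    (horth₁ : ∀ w ∈ Vh, a (u - uh) w = b (ι (lam - lamh)) w)
    (horth₂ : ∀ μ ∈ Lh, b (ι μ) (u - uh) + α * inner ℝ (lam - lamh) μ = 0)
    (huh : uh ∈ Vh) (hlamh : lamh ∈ Lh) {vh : V} {μh : Q} (hvh : vh ∈ Vh) (hμh : μh ∈ Lh) :
    α₂ * ‖u - uh‖ ^ 2 + α * ‖lam - lamh‖ ^ 2 ≤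
      α₁ * ‖u - uh‖ * ‖u - vh‖ + α * (‖lam - lamh‖ * ‖lam - μh‖) +
        M * ‖ι (lam - lamh)‖ * ‖u - vh‖ + M * ‖ι (lam - μh)‖ * ‖u - uh‖ := by
  have henergy : a (u - uh) (u - uh) + α * inner ℝ (lam - lamh) (lam - lamh) =
      a (u - uh) (u - vh) - b (ι (lam - lamh)) (u - vh) +
        α * inner ℝ (lam - lamh) (lam - μh) + b (ι (lam - μh)) (u - uh) := by
    have h₁ := horth₁ _ (Vh.sub_mem hvh huh)
    have h₂ := horth₂ _ (Lh.sub_mem hμh hlamh)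
    simp only [map_sub, LinearMap.sub_apply, inner_sub_right] at h₁ h₂ ⊢
    linarith
  rw [← real_inner_self_eq_norm_sq (lam - lamh)]
  linarith [ha_coer (u - uh), ha_cont (u - uh) (u - vh), hb_cont (ι (lam - μh)) (u - uh),
    neg_abs_le (b (ι (lam - lamh)) (u - vh)),
    LinearMap.abs_apply₂_le hb_cont (ι (lam - lamh)) (u - vh),
    mul_le_mul_of_nonneg_left (real_inner_le_norm (lam - lamh) (lam - μh)) hα]

end RobinCoupled

theorem stmt_14 {V Lam Q : Type*}
    [NormedAddCommGroup V] [NormedSpace ℝ V]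
    [NormedAddCommGroup Lam] [NormedSpace ℝ Lam]
    [NormedAddCommGroup Q] [InnerProductSpace ℝ Q]
    (ι : Q →ₗ[ℝ] Lam)
    (a : V →ₗ[ℝ] V →ₗ[ℝ] ℝ) (b : Lam →ₗ[ℝ] V →ₗ[ℝ] ℝ)
    (α₁ α₂ M β : ℝ) (hα₁ : 0 < α₁) (hα₂ : 0 < α₂) (hM : 0 < M) (hβ : 0 < β)
    (ha_cont : ∀ u v : V, a u v ≤ α₁ * ‖u‖ * ‖v‖)
    (ha_coer : ∀ u : V, α₂ * ‖u‖ ^ 2 ≤ a u u)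
    (hb_cont : ∀ (μ : Lam) (v : V), b μ v ≤ M * ‖μ‖ * ‖v‖)
    (Vh : Submodule ℝ V) (Lh : Submodule ℝ Q)
    (hb_infsup_h : ∀ μh ∈ Lh, ∀ ε > 0,
      ∃ vh ∈ Vh, ‖vh‖ ≤ 1 ∧ β * ‖ι μh‖ - ε ≤ b (ι μh) vh) :
    ∃ C : ℝ, 0 < C ∧ ∀ α : ℝ, 0 < α → ∀ (F : V →L[ℝ] ℝ) (u uh : V) (lam lamh : Q),
      (∀ v : V, a u v - b (ι lam) v = F v) →
      (∀ μ : Q, b (ι μ) u + α * (inner ℝ lam μ : ℝ) = 0) →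
      uh ∈ Vh → lamh ∈ Lh →
      (∀ vh ∈ Vh, a uh vh - b (ι lamh) vh = F vh) →
      (∀ μh ∈ Lh, b (ι μh) uh + α * (inner ℝ lamh μh : ℝ) = 0) →
      ∀ vh ∈ Vh, ∀ μh ∈ Lh,
        ‖u - uh‖ ^ 2 + ‖ι (lam - lamh)‖ ^ 2 + α * ‖lam - lamh‖ ^ 2 ≤
          C * (‖u - vh‖ ^ 2 + ‖ι (lam - μh)‖ ^ 2 + α * ‖lam - μh‖ ^ 2) := by
  obtain ⟨C, hC, hbound⟩ := exists_const_sq_le_of_energy_of_infsup (α₁ := α₁) hα₂ hM.le hβ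
  refine ⟨C, hC, fun α hα F u uh lam lamh hc₁ hc₂ huh hlamh hd₁ hd₂ vh hvh μh hμh => ?_⟩
  have horth₁ := galerkin_orthogonality_fst hc₁ hd₁
  have horth₂ := galerkin_orthogonality_snd hc₂ hd₂
  exact hbound α _ _ _ _ _ _ hα.le (norm_nonneg _) (norm_nonneg _)
    (energy_error_bound hα.le ha_cont ha_coer hb_cont horth₁ horth₂ huh hlamh hvh hμh)
    (infsup_error_bound hα₁.le hM.le hβ.le ha_cont hb_cont hb_infsup_h horth₁ hlamh hμh)
end
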